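/- arXiv:math/0703856 — 4 statements merged into one kernel-verified Lean document; each statement's English description precedes it below -/
import Mathlib

section
/- Let D ⊆ ℤ be a finite set, A ⊆ ℤ be D-avoiding (no difference of two elements of A lies in D), and let diam D = max_{d∈D} |d|. If A' = A ∩ [0, n-1] and s = |A'|, then s ≤ m(D)·n + diam D, where m(D) is the supremum of upper densities of D-avoiding subsets of ℤ. -/
open Filter

noncomputable def upperDensity (A : Set ℤ) : ℝ :=
  limsup (fun n : ℕ =>
    (Nat.card ↥(A ∩ Set.Icc (-(n : ℤ)) (n : ℤ)) : ℝ) / (2 * (n : ℝ) + 1)) atTop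

def avoids (A D : Set ℤ) : Prop := ∀ a ∈ A, ∀ b ∈ A, a - b ∉ D

/-- m(D): supremum of upper densities of D-avoiding subsets of ℤ. -/
noncomputable def mD (D : Set ℤ) : ℝ :=
  sSup {x : ℝ | ∃ A : Set ℤ, avoids A D ∧ x = upperDensity A}

/-- diam D = max over d ∈ D of |d| (0 if D is empty). -/
def diamD (D : Finset ℤ) : ℕ := D.sup fun d => d.natAbs

lemma card_window_le (A : Set ℤ) (m : ℕ) :
    (Nat.card ↥(A ∩ Set.Icc (-(m : ℤ)) (m : ℤ)) : ℝ) ≤ 2 * (m : ℝ) + 1 := by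
  have h1 : Nat.card ↥(A ∩ Set.Icc (-(m : ℤ)) (m : ℤ)) ≤ 2 * m + 1 := by
    rw [Nat.card_coe_set_eq]
    calc (A ∩ Set.Icc (-(m : ℤ)) (m : ℤ)).ncard
        ≤ (Set.Icc (-(m : ℤ)) (m : ℤ)).ncard :=
          Set.ncard_le_ncard Set.inter_subset_right (Set.finite_Icc _ _)
      _ = 2 * m + 1 := by
          rw [← Nat.card_coe_set_eq, Nat.card_eq_card_toFinset,
            Set.toFinset_Icc, Int.card_Icc]
          omega
  calc (Nat.card ↥(A ∩ Set.Icc (-(m : ℤ)) (m : ℤ)) : ℝ) ≤ ((2 * m + 1 : ℕ) : ℝ) := by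
        exact_mod_cast h1
    _ = 2 * (m : ℝ) + 1 := by push_cast; ring

lemma upperDensity_nonneg_aux (A : Set ℤ) :
    ∀ m : ℕ, (0 : ℝ) ≤ (Nat.card ↥(A ∩ Set.Icc (-(m : ℤ)) (m : ℤ)) : ℝ) / (2 * (m : ℝ) + 1) := by
  intro m
  positivity

lemma upperDensity_bdd (A : Set ℤ) :
    IsBoundedUnder (· ≤ ·) atTop (fun m : ℕ =>
      (Nat.card ↥(A ∩ Set.Icc (-(m : ℤ)) (m : ℤ)) : ℝ) / (2 * (m : ℝ) + 1)) := by
  refine ⟨1, Filter.eventually_map.2 (Eventually.of_forall fun m => ?_)⟩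
  show _ / _ ≤ (1:ℝ)
  rw [div_le_one (by positivity)]
  exact card_window_le A m

lemma upperDensity_cobdd (A : Set ℤ) :
    IsCoboundedUnder (· ≤ ·) atTop (fun m : ℕ =>
      (Nat.card ↥(A ∩ Set.Icc (-(m : ℤ)) (m : ℤ)) : ℝ) / (2 * (m : ℝ) + 1)) := by
  exact IsBoundedUnder.isCoboundedUnder_le
    ⟨0, Filter.eventually_map.2 (Eventually.of_forall fun m => upperDensity_nonneg_aux A m)⟩

lemma upperDensity_le_one (A : Set ℤ) : upperDensity A ≤ 1 := by
  refine limsup_le_of_le (upperDensity_cobdd A) (Eventually.of_forall fun m => ?_)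
  rw [div_le_one (by positivity)]
  exact card_window_le A m

lemma mD_mem {A : Set ℤ} {D : Set ℤ} (h : avoids A D) :
    upperDensity A ∈ {x : ℝ | ∃ A : Set ℤ, avoids A D ∧ x = upperDensity A} :=
  ⟨A, h, rfl⟩

lemma le_mD {A : Set ℤ} {D : Set ℤ} (h : avoids A D) : upperDensity A ≤ mD D :=
  le_csSup ⟨1, fun x ⟨B, _, hx⟩ => hx ▸ upperDensity_le_one B⟩ (mD_mem h)

lemma mD_le_one (D : Set ℤ) : mD D ≤ 1 := by
  refine csSup_le ⟨upperDensity ∅, ∅, fun a ha => absurd ha (Set.notMem_empty a), rfl⟩ ?_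
  rintro x ⟨B, _, rfl⟩
  exact upperDensity_le_one B

/-- If A is D-avoiding and A' = A ∩ [0, n-1] has s elements, then
s ≤ m(D)·n + diam D. -/
theorem stmt2 (D : Finset ℤ) (A : Set ℤ) (hA : avoids A (D : Set ℤ))
    (n : ℕ) (hn : 0 < n) :
    (Nat.card ↥(A ∩ Set.Ico (0 : ℤ) (n : ℤ)) : ℝ) ≤
      mD (D : Set ℤ) * (n : ℝ) + (diamD D : ℝ) := by
  set d : ℕ := diamD D with hd
  set p : ℕ := n + d with hp
  have hppos : 0 < p := by omega
  set A' : Set ℤ := A ∩ Set.Ico (0 : ℤ) (n : ℤ) with hA'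
  have hA'fin : A'.Finite := (Set.finite_Ico _ _).subset Set.inter_subset_right
  set s : ℕ := Nat.card ↥A' with hs
  -- the periodic set
  set B : Set ℤ := {x : ℤ | x % (p : ℤ) ∈ A'} with hB
  have hmem : ∀ x ∈ A', (0:ℤ) ≤ x ∧ x < n := fun x hx => ⟨hx.2.1, hx.2.2⟩
  -- B avoids D
  have hBavoid : avoids B (D : Set ℤ) := by
    intro x hx y hy hxy
    have hx' : x % (p:ℤ) ∈ A' := hx
    have hy' : y % (p:ℤ) ∈ A' := hy
    have hax := hmem _ hx'
    have hay := hmem _ hy'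
    have hxe : (p:ℤ) * (x / p) + x % p = x := Int.mul_ediv_add_emod x p
    have hye : (p:ℤ) * (y / p) + y % p = y := Int.mul_ediv_add_emod y p
    have hDle : (x - y).natAbs ≤ d := Finset.le_sup (f := fun t => t.natAbs) hxy
    by_cases hj : x / (p:ℤ) - y / (p:ℤ) = 0
    · have hxy3 : x - y = x % p - y % p := by
        have : (p:ℤ) * (x / p) = (p:ℤ) * (y / p) := by
          have : x / (p:ℤ) = y / (p:ℤ) := by linarith
          rw [this]
        linarith
      exact hA _ hx'.1 _ hy'.1 (hxy3 ▸ hxy)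
    · obtain ⟨t, ht1, ht2⟩ : ∃ t : ℤ, x - y = (x % p - y % p) + t ∧
          ((p:ℤ) ≤ t ∨ t ≤ -(p:ℤ)) := by
        refine ⟨(p:ℤ) * (x / p - y / p), by rw [mul_sub]; linarith, ?_⟩
        rcases lt_or_gt_of_ne hj with h | h
        · right
          have h1 : x / (p:ℤ) - y / (p:ℤ) ≤ -1 := by omega
          have := mul_le_mul_of_nonneg_left h1 (by positivity : (0:ℤ) ≤ (p:ℤ))
          linarith
        · left
          have h1 : (1:ℤ) ≤ x / (p:ℤ) - y / (p:ℤ) := by omega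
          have := mul_le_mul_of_nonneg_left h1 (by positivity : (0:ℤ) ≤ (p:ℤ))
          linarith
      have hb1 := hax.1; have hb2 := hax.2
      have hb3 := hay.1; have hb4 := hay.2
      omega
  -- counting lower bound
  have hcount : ∀ k : ℕ, (2 * k * s : ℕ) ≤ Nat.card ↥(B ∩ Set.Icc (-((p*k : ℕ) : ℤ)) ((p*k : ℕ) : ℤ)) := by
    intro k
    classical
    set F : Finset ℤ := hA'fin.toFinset with hF
    have hFA : ∀ x ∈ F, x ∈ A' := fun x hx => hA'fin.mem_toFinset.1 hx
    set T : Finset ℤ :=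
      ((Finset.Ico (-(k:ℤ)) (k:ℤ)) ×ˢ F).image (fun q : ℤ × ℤ => q.2 + q.1 * (p:ℤ)) with hT
    have hmod : ∀ a j : ℤ, 0 ≤ a → a < (p:ℤ) → (a + j * (p:ℤ)) % (p:ℤ) = a := by
      intro a j h0 h1
      rw [Int.add_mul_emod_self_right, Int.emod_eq_of_lt h0 h1]
    have hTcard : T.card = 2 * k * s := by
      rw [hT, Finset.card_image_of_injOn, Finset.card_product, Int.card_Ico]
      · have hFcard : F.card = s := by
          rw [hs, Nat.card_coe_set_eq, Set.ncard_eq_toFinset_card _ hA'fin]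
        have h2k : ((k:ℤ) - -(k:ℤ)).toNat = 2*k := by omega
        rw [hFcard, h2k]
      · intro q hq q' hq' heq
        dsimp only at heq
        simp only [Finset.mem_coe, Finset.mem_product] at hq hq'
        have ha := hmem _ (hFA _ hq.2)
        have ha' := hmem _ (hFA _ hq'.2)
        have hpn : (n:ℤ) ≤ (p:ℤ) := by exact_mod_cast Nat.le_add_right n d
        have h2 : q.2 = q'.2 := by
          have e1 : (q.2 + q.1 * (p:ℤ)) % (p:ℤ) = q.2 :=
            hmod _ _ ha.1 (lt_of_lt_of_le ha.2 hpn)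
          have e2 : (q'.2 + q'.1 * (p:ℤ)) % (p:ℤ) = q'.2 :=
            hmod _ _ ha'.1 (lt_of_lt_of_le ha'.2 hpn)
          rw [← e1, ← e2, heq]

        have h1 : q.1 = q'.1 := by
          have : q.1 * (p:ℤ) = q'.1 * (p:ℤ) := by
            linarith [heq, h2]
          exact mul_right_cancel₀ (by exact_mod_cast hppos.ne') this
        exact Prod.ext h1 h2
    have hsub : (↑T : Set ℤ) ⊆ B ∩ Set.Icc (-((p*k : ℕ) : ℤ)) ((p*k : ℕ) : ℤ) := by
      intro x hx
      simp only [hT, Finset.coe_image, Set.mem_image, Finset.mem_coe,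
        Finset.mem_product] at hx
      obtain ⟨q, ⟨hq1, hq2⟩, rfl⟩ := hx
      rw [Finset.mem_Ico] at hq1
      have ha := hmem _ (hFA _ hq2)
      have hpn : (n:ℤ) ≤ (p:ℤ) := by exact_mod_cast Nat.le_add_right n d
      constructor
      · show (q.2 + q.1 * (p:ℤ)) % (p:ℤ) ∈ A'
        rw [hmod _ _ ha.1 (lt_of_lt_of_le ha.2 hpn)]
        exact hFA _ hq2
      · have hkp : ((p*k : ℕ) : ℤ) = (p:ℤ) * (k:ℤ) := by push_cast; ring
        have hbl : -((k:ℤ)) * (p:ℤ) ≤ q.1 * (p:ℤ) :=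
          mul_le_mul_of_nonneg_right hq1.1 (by positivity)
        have hbu : q.1 * (p:ℤ) ≤ ((k:ℤ) - 1) * (p:ℤ) :=
          mul_le_mul_of_nonneg_right (by omega) (by positivity)
        constructor
        · rw [hkp]; nlinarith [ha.1]
        · rw [hkp]
          have : ((k:ℤ) - 1) * (p:ℤ) + (p:ℤ) = (p:ℤ) * (k:ℤ) := by ring
          nlinarith [ha.2, hpn]
    calc (2 * k * s : ℕ) = T.card := hTcard.symm
      _ ≤ Nat.card ↥(B ∩ Set.Icc (-((p*k : ℕ) : ℤ)) ((p*k : ℕ) : ℤ)) := by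
          rw [Nat.card_coe_set_eq, ← Set.ncard_coe_finset T]
          exact Set.ncard_le_ncard hsub ((Set.finite_Icc _ _).subset Set.inter_subset_right)
  -- density lower bound
  have hdens : (s : ℝ) / (p : ℝ) ≤ upperDensity B := by
    have hpR : (0:ℝ) < (p:ℝ) := by exact_mod_cast hppos
    have hflb : ∀ k : ℕ, (2*(k:ℝ)*(s:ℝ))/(2*((p:ℝ)*(k:ℝ))+1) ≤
        (Nat.card ↥(B ∩ Set.Icc (-((p*k : ℕ) : ℤ)) ((p*k : ℕ) : ℤ)) : ℝ) / (2 * ((p*k : ℕ) : ℝ) + 1) := by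
      intro k
      have hcast : ((2*k*s : ℕ) : ℝ) ≤
          (Nat.card ↥(B ∩ Set.Icc (-((p*k : ℕ) : ℤ)) ((p*k : ℕ) : ℤ)) : ℝ) := by
        exact_mod_cast hcount k
      have hden : ((p*k : ℕ) : ℝ) = (p:ℝ)*(k:ℝ) := by push_cast; ring
      rw [hden]
      have hnum : (2*(k:ℝ)*(s:ℝ)) ≤
          (Nat.card ↥(B ∩ Set.Icc (-((p*k : ℕ) : ℤ)) ((p*k : ℕ) : ℤ)) : ℝ) := by
        calc (2*(k:ℝ)*(s:ℝ)) = ((2*k*s : ℕ) : ℝ) := by push_cast; ring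
          _ ≤ _ := hcast
      gcongr
    have hlim : Tendsto (fun k : ℕ => (2*(k:ℝ)*(s:ℝ))/(2*((p:ℝ)*(k:ℝ))+1)) atTop
        (nhds ((s:ℝ)/(p:ℝ))) := by
      have hne : (2*(p:ℝ) + 0) ≠ 0 := by positivity
      have h1 : Tendsto (fun k : ℕ => (2*(s:ℝ))/(2*(p:ℝ) + 1/(k:ℝ))) atTop
          (nhds ((2*(s:ℝ))/(2*(p:ℝ)+0))) :=
        tendsto_const_nhds.div (tendsto_const_nhds.add tendsto_one_div_atTop_nhds_zero_nat) hne
      have h2 : (2*(s:ℝ))/(2*(p:ℝ)+0) = (s:ℝ)/(p:ℝ) := by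
        rw [add_zero, mul_div_mul_left _ _ (two_ne_zero)]
      rw [h2] at h1
      apply h1.congr'
      filter_upwards [eventually_ge_atTop 1] with k hk
      have hk0 : (0:ℝ) < (k:ℝ) := by exact_mod_cast hk
      field_simp
    refine le_of_forall_lt_imp_le_of_dense ?_
    intro c hc
    refine le_limsup_of_frequently_le ?_ (upperDensity_bdd B)
    rw [frequently_atTop]
    intro N
    obtain ⟨K, hK⟩ := (eventually_atTop.1 (hlim.eventually_const_lt hc))
    refine ⟨p * max N K, ?_, ?_⟩
    · calc N ≤ max N K := le_max_left _ _
        _ ≤ p * max N K := Nat.le_mul_of_pos_left _ hppos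
    · exact le_trans (hK _ (le_max_right N K)).le (hflb (max N K))
  have hfinal : (s : ℝ) ≤ mD (D : Set ℤ) * (p : ℝ) := by
    have h1 : (s : ℝ) / (p : ℝ) ≤ mD (D : Set ℤ) := hdens.trans (le_mD hBavoid)
    rw [div_le_iff₀ (by positivity)] at h1
    linarith
  have hmd1 : mD (D : Set ℤ) ≤ 1 := mD_le_one _
  have := hfinal
  rw [hp] at this
  push_cast at this ⊢
  nlinarith [this, hmd1, Nat.cast_nonneg (α := ℝ) d]
end

section
/- Let d ≥ 1 and let D be a set of positive reals whose elements are algebraically independent over ℚ. Then the clique number of the graph on ℝ^d where x, y are adjacent iff the Euclidean distance |x − y| ∈ D is bounded by a function f(d) depending only on d. -/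
open Matrix

/-- Rank of a sum of square matrices over `ℝ` is at most the sum of the ranks. -/
lemma stmt16_rank_add_le {k : Type*} [Fintype k] (A B : Matrix k k ℝ) :
    (A + B).rank ≤ A.rank + B.rank := by
  have h : LinearMap.range (A + B).mulVecLin ≤
      (LinearMap.range A.mulVecLin ⊔ LinearMap.range B.mulVecLin : Submodule ℝ (k → ℝ)) := by
    rw [Matrix.mulVecLin_add]
    rintro _ ⟨v, rfl⟩
    exact Submodule.add_mem_sup (LinearMap.mem_range_self _ v) (LinearMap.mem_range_self _ v)
  calc (A + B).rank
      ≤ Module.finrank ℝ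
        ((LinearMap.range A.mulVecLin ⊔ LinearMap.range B.mulVecLin : Submodule ℝ (k → ℝ))) :=
        Submodule.finrank_mono h
    _ ≤ A.rank + B.rank := Submodule.finrank_add_le_finrank_add_finrank _ _

/-- An outer product of vectors has rank at most `1`. -/
lemma stmt16_rank_vecMulVec_le {k : Type*} [Fintype k] (u v : k → ℝ) :
    (Matrix.vecMulVec u v).rank ≤ 1 := by
  rw [Matrix.vecMulVec_eq Unit]
  calc (Matrix.replicateCol Unit u * Matrix.replicateRow Unit v).rank ≤ (Matrix.replicateCol Unit u).rank :=
        Matrix.rank_mul_le_left _ _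
    _ ≤ Fintype.card Unit := Matrix.rank_le_card_width _
    _ = 1 := by simp

/-- The determinant of the all-ones-off-diagonal matrix of size `≥ 2` is nonzero. -/
lemma stmt16_det_pattern_ne_zero (m : ℕ) (hm : 2 ≤ m)
    (Q : Matrix (Fin m) (Fin m) ℚ) (hQ : ∀ i j, Q i j = if i = j then 0 else 1) :
    Q.det ≠ 0 := by
  set J : Matrix (Fin m) (Fin m) ℚ := Matrix.of (fun _ _ => 1) with hJ
  have hJJ : J * J = (m : ℚ) • J := by
    ext i j
    simp [hJ, Matrix.mul_apply, Matrix.smul_apply]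
  have hQJ : Q = J - 1 := by
    ext i j
    by_cases h : i = j <;> simp [hQ, hJ, Matrix.one_apply, h]
  set a : ℚ := ((m : ℚ) - 1)⁻¹ with ha
  have hm1 : (m : ℚ) - 1 ≠ 0 := by
    have : (2 : ℚ) ≤ (m : ℚ) := by exact_mod_cast hm
    linarith
  have hainv : a * ((m : ℚ) - 1) = 1 := inv_mul_cancel₀ hm1
  have hright : Q * (a • J - 1) = 1 := by
    rw [hQJ]
    have expand : (J - 1) * (a • J - 1) = a • (J * J) - a • J - J + 1 := by
      simp only [mul_sub, sub_mul, one_mul, mul_one, Matrix.mul_smul, Matrix.smul_mul]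
      abel
    rw [expand, hJJ, smul_smul]
    have h1 : (a * (m : ℚ)) • J - a • J - J = ((a * (m:ℚ) - a - 1)) • J := by
      rw [sub_smul, sub_smul, one_smul]
    rw [h1]
    have h2 : a * (m:ℚ) - a - 1 = 0 := by
      have := hainv; ring_nf at this ⊢; linarith
    rw [h2, zero_smul, zero_add]
  intro h0
  have := Matrix.isUnit_det_of_right_inverse hright
  rw [h0] at this
  exact (not_isUnit_zero : ¬ IsUnit (0:ℚ)) this

/-- The (d+3)×(d+3) matrix of squared distances of points in `ℝ^d` is singular. -/
lemma stmt16_det_sq_dist_zero (d : ℕ) (z : Fin (d + 3) → EuclideanSpace ℝ (Fin d)) :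
    (Matrix.of fun i j => dist (z i) (z j) ^ 2).det = 0 := by
  set A : Matrix (Fin (d + 3)) (Fin (d + 3)) ℝ :=
    Matrix.of fun i j => dist (z i) (z j) ^ 2 with hA
  -- decomposition: A = u·1ᵗ + (1·uᵗ + Pᵀ M)
  set u : Fin (d + 3) → ℝ := fun i => ∑ k, (z i k) ^ 2 with hu
  set M : Matrix (Fin d) (Fin (d + 3)) ℝ := Matrix.of fun k i => z i k with hM
  set P : Matrix (Fin d) (Fin (d + 3)) ℝ := Matrix.of fun k i => (-2) * z i k with hP
  have hdecomp : A = Matrix.vecMulVec u (fun _ => 1) +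
      (Matrix.vecMulVec (fun _ => 1) u + Pᵀ * M) := by
    ext i j
    have hdist : dist (z i) (z j) ^ 2 = ∑ k, (z i k - z j k) ^ 2 := by
      rw [EuclideanSpace.dist_eq, Real.sq_sqrt (by positivity)]
      refine Finset.sum_congr rfl fun k _ => ?_
      rw [Real.dist_eq, sq_abs]
    have hsum : ∑ k, (z i k - z j k) ^ 2 =
        (∑ k, (z i k) ^ 2) + ((∑ k, (z j k) ^ 2) + ∑ k, (-2) * z i k * z j k) := by
      rw [← Finset.sum_add_distrib, ← Finset.sum_add_distrib]
      refine Finset.sum_congr rfl fun k _ => ?_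
      ring
    simp only [hA, Matrix.add_apply, Matrix.of_apply, Matrix.vecMulVec_apply,
      Matrix.mul_apply, Matrix.transpose_apply, hP, hM, hu]
    rw [hdist, hsum]
    ring_nf
  -- rank bound
  have hrank : A.rank ≤ d + 2 := by
    rw [hdecomp]
    have h1 : (Matrix.vecMulVec u (fun _ => (1:ℝ))).rank ≤ 1 := stmt16_rank_vecMulVec_le _ _
    have h2 : (Matrix.vecMulVec (fun _ => (1:ℝ)) u).rank ≤ 1 := stmt16_rank_vecMulVec_le _ _
    have h3 : (Pᵀ * M).rank ≤ d := by
      calc (Pᵀ * M).rank ≤ Pᵀ.rank := Matrix.rank_mul_le_left _ _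
        _ ≤ Fintype.card (Fin d) := Matrix.rank_le_card_width _
        _ = d := by simp
    calc (Matrix.vecMulVec u (fun _ => 1) +
          (Matrix.vecMulVec (fun _ => 1) u + Pᵀ * M)).rank
        ≤ (Matrix.vecMulVec u (fun _ => 1)).rank +
          (Matrix.vecMulVec (fun _ => 1) u + Pᵀ * M).rank := stmt16_rank_add_le _ _
      _ ≤ (Matrix.vecMulVec u (fun _ => 1)).rank +
          ((Matrix.vecMulVec (fun _ => 1) u).rank + (Pᵀ * M).rank) :=
          Nat.add_le_add_left (stmt16_rank_add_le _ _) _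
      _ ≤ 1 + (1 + d) := by
          exact Nat.add_le_add h1 (Nat.add_le_add h2 h3)
      _ = d + 2 := by omega
  -- rank < card forces det = 0
  by_contra hdet
  have hunit : IsUnit A := (Matrix.isUnit_iff_isUnit_det A).2 (isUnit_iff_ne_zero.2 hdet)
  have := Matrix.rank_of_isUnit A hunit
  rw [Fintype.card_fin] at this
  omega

/-- The clique number of the distance graph G_{ℝ^d}(D), for a set D of positive
reals that is algebraically independent over ℚ, is bounded by a function of d
alone: there is f : ℕ → ℕ such that any finite family of distinct points of ℝ^d
with all pairwise distances in D has at most f d points. -/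
theorem stmt16 :
    ∃ f : ℕ → ℕ, ∀ (d : ℕ) (D : Set ℝ),
      (∀ x ∈ D, 0 < x) →
      AlgebraicIndependent ℚ ((↑) : D → ℝ) →
      ∀ (n : ℕ) (x : Fin n → EuclideanSpace ℝ (Fin d)),
        Function.Injective x →
        (∀ i j, i ≠ j → dist (x i) (x j) ∈ D) →
        n ≤ f d := by
  refine ⟨fun d => d + 2, fun d D _hpos hD n x _hinj hdist => ?_⟩
  by_contra hn
  push_neg at hn
  have hle : d + 3 ≤ n := hn
  -- restrict to the first d+3 points
  set z : Fin (d + 3) → EuclideanSpace ℝ (Fin d) := fun i => x (Fin.castLE hle i) with hz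
  have hzD : ∀ i j : Fin (d + 3), i ≠ j → dist (z i) (z j) ∈ D := by
    intro i j hij
    exact hdist _ _ (fun h => hij (Fin.castLE_injective hle h))
  -- the real squared-distance matrix
  set A : Matrix (Fin (d + 3)) (Fin (d + 3)) ℝ :=
    Matrix.of fun i j => dist (z i) (z j) ^ 2 with hA
  have hdetA : A.det = 0 := stmt16_det_sq_dist_zero d z
  -- lift to a polynomial matrix
  classical
  set Pm : Matrix (Fin (d + 3)) (Fin (d + 3)) (MvPolynomial D ℚ) :=
    Matrix.of fun i j =>
      if h : i = j then 0 else (MvPolynomial.X ⟨dist (z i) (z j), hzD i j h⟩) ^ 2 with hPm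
  have haev : Function.Injective (MvPolynomial.aeval ((↑) : D → ℝ) :
      MvPolynomial D ℚ →ₐ[ℚ] ℝ) := hD
  have hmap : Pm.map (MvPolynomial.aeval ((↑) : D → ℝ)) = A := by
    ext i j
    by_cases h : i = j
    · subst h
      simp [hPm, hA]
    · simp [hPm, hA, h]
  have hPdet : Pm.det = 0 := by
    apply haev
    rw [map_zero]
    have : (MvPolynomial.aeval ((↑) : D → ℝ) : MvPolynomial D ℚ →ₐ[ℚ] ℝ) Pm.det =
        (Pm.map (MvPolynomial.aeval ((↑) : D → ℝ))).det := by
      exact RingHom.map_det _ _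
    rw [this, hmap, hdetA]
  -- evaluate all variables at 1
  set φ : MvPolynomial D ℚ →ₐ[ℚ] ℚ := MvPolynomial.aeval (fun _ => (1 : ℚ)) with hφ
  set Q : Matrix (Fin (d + 3)) (Fin (d + 3)) ℚ := Pm.map φ with hQ
  have hQdet : Q.det = 0 := by
    have h2 : φ Pm.det = (Pm.map ⇑φ).det := RingHom.map_det _ _
    rw [hQ, ← h2, hPdet, map_zero]
  have hQentries : ∀ i j, Q i j = if i = j then 0 else 1 := by
    intro i j
    by_cases h : i = j
    · simp [hQ, hPm, h]
    · simp [hQ, hPm, h, hφ]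
  exact stmt16_det_pattern_ne_zero (d + 3) (by omega) Q hQentries hQdet
end

section
/- Let t₁, …, t_{n-1} be nonzero real numbers and let M be the n×n matrix with entries m_{i,j} = t_{min(i,j)} for i ≠ j and m_{i,i} = 0. Then M has rank at least n − 1. -/
/-! Subtracting from each column of `M` its left neighbour and deleting the last row leaves an
`(n-1) × (n-1)` matrix whose entry `(i, k)` is `t (min i (k+1)) - t (min i k) = 0` for `i < k`
and `t k - 0` for `i = k`: it is lower triangular with the nonzero diagonal `t 0, …, t (n-2)`,
hence invertible, and rank does not increase under taking submatrices and products. -/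

open Matrix

namespace Matrix

variable {R : Type*}

theorem card_le_rank_of_isUnit_submatrix_mul [CommRing R] [StrongRankCondition R]
    {m n ι : Type*} [Fintype n] [Fintype ι] [DecidableEq ι]
    (A : Matrix m n R) (r : ι → m) (C : Matrix n ι R) (h : IsUnit (A.submatrix r id * C)) :
    Fintype.card ι ≤ A.rank :=
  calc Fintype.card ι = (A.submatrix r id * C).rank := (rank_of_isUnit _ h).symm
    _ ≤ (A.submatrix r id).rank := rank_mul_le_left _ _
    _ ≤ A.rank := rank_submatrix_le _ _ _

def succSubCastSucc (R : Type*) [Ring R] (m : ℕ) : Matrix (Fin (m + 1)) (Fin m) R :=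
  (1 : Matrix (Fin (m + 1)) (Fin (m + 1)) R).submatrix id Fin.succ -
    (1 : Matrix (Fin (m + 1)) (Fin (m + 1)) R).submatrix id Fin.castSucc

theorem mul_succSubCastSucc [Ring R] {l : Type*} {m : ℕ} (A : Matrix l (Fin (m + 1)) R) :
    A * succSubCastSucc R m = A.submatrix id Fin.succ - A.submatrix id Fin.castSucc := by
  rw [succSubCastSucc, Matrix.mul_sub]
  exact congrArg₂ _ (mul_submatrix_one (Equiv.refl _) _ A) (mul_submatrix_one (Equiv.refl _) _ A)

def offDiagMinMatrix [Zero R] (t : ℕ → R) (n : ℕ) : Matrix (Fin n) (Fin n) R :=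
  of fun i j => if i = j then 0 else t (min i.1 j.1)

section offDiagMinMatrix

variable [Ring R] (t : ℕ → R) (m : ℕ)

theorem offDiagMinMatrix_castSucc_mul_succSubCastSucc_apply (i k : Fin m) :
    ((offDiagMinMatrix t (m + 1)).submatrix Fin.castSucc id * succSubCastSucc R m) i k =
      (if i.1 = k.1 + 1 then 0 else t (min i.1 (k.1 + 1))) -
        (if i = k then 0 else t (min i.1 k.1)) := by
  simp [mul_succSubCastSucc, offDiagMinMatrix, Fin.ext_iff]

theorem offDiagMinMatrix_castSucc_mul_succSubCastSucc_isLowerTriangular :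
    ((offDiagMinMatrix t (m + 1)).submatrix Fin.castSucc id *
      succSubCastSucc R m).IsLowerTriangular := by
  intro i k (hik : i < k)
  rw [offDiagMinMatrix_castSucc_mul_succSubCastSucc_apply, if_neg (by omega), if_neg hik.ne,
    min_eq_left (by omega), min_eq_left (by omega), sub_self]

end offDiagMinMatrix

theorem det_offDiagMinMatrix_castSucc_mul_succSubCastSucc [CommRing R] (t : ℕ → R) (m : ℕ) :
    ((offDiagMinMatrix t (m + 1)).submatrix Fin.castSucc id * succSubCastSucc R m).det =
      ∏ k : Fin m, t k := by
  rw [det_of_isLowerTriangular _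
    (offDiagMinMatrix_castSucc_mul_succSubCastSucc_isLowerTriangular t m)]
  refine Finset.prod_congr rfl fun k _ => ?_
  rw [offDiagMinMatrix_castSucc_mul_succSubCastSucc_apply, if_neg (by omega), if_pos rfl,
    min_eq_left (by omega), sub_zero]

end Matrix

/-- Let t₁,…,t_{n−1} be nonzero reals and M the n×n matrix with
m_{ij} = t_{min(i,j)} for i ≠ j and 0 on the diagonal. Then rank M ≥ n − 1. -/
theorem stmt18 (n : ℕ) (t : ℕ → ℝ) (ht : ∀ i, i < n - 1 → t i ≠ 0) :
    n - 1 ≤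
      (Matrix.of fun i j : Fin n =>
        if i = j then (0 : ℝ) else t (min i.1 j.1) : Matrix (Fin n) (Fin n) ℝ).rank := by
  obtain _ | m := n
  · simp
  have hdet : IsUnit ((offDiagMinMatrix t (m + 1)).submatrix Fin.castSucc id *
      succSubCastSucc ℝ m).det := by
    rw [det_offDiagMinMatrix_castSucc_mul_succSubCastSucc, isUnit_iff_ne_zero]
    exact Finset.prod_ne_zero_iff.2 fun k _ => ht k (by simp)
  simpa [offDiagMinMatrix] using
    card_le_rank_of_isUnit_submatrix_mul _ _ _ ((isUnit_iff_isUnit_det _).2 hdet)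
end

section
/- Every finite subgraph of the graph G_{ℝ}(D), whose vertices are the reals and whose edges join pairs of points at distance in D for a set D = {d₁,…,d_k} of reals algebraically independent over ℚ (in particular linearly independent over ℚ), has chromatic number at most that of the k-dimensional rectangular grid graph ℤ^k with edges between points differing by a standard basis vector; in particular χ(G_ℝ(D)) ≤ 2. -/
/-- The distance graph on ℝ: x ~ y iff |x − y| ∈ D. -/
def distGraph (D : Set ℝ) : SimpleGraph ℝ where
  Adj x y := x ≠ y ∧ |x - y| ∈ D
  symm := by
    constructor
    intro x y h
    exact ⟨h.1.symm, by rw [abs_sub_comm]; exact h.2⟩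
  loopless := by
    constructor
    intro x h
    exact h.1 rfl

/-- The k-dimensional rectangular grid graph on ℤ^k: edges between points
differing by a standard basis vector. -/
def gridGraph (k : ℕ) : SimpleGraph (Fin k → ℤ) where
  Adj u v := ∃ i, |u i - v i| = 1 ∧ ∀ j, j ≠ i → u j = v j
  symm := by
    constructor
    rintro u v ⟨i, hi, hj⟩
    exact ⟨i, by rwa [abs_sub_comm], fun j hji => (hj j hji).symm⟩
  loopless := by
    constructor
    rintro u ⟨i, hi, -⟩
    simp at hi

/-!
Since the `dᵢ` are linearly independent over `ℚ`, there is a `ℚ`-linear map `f : ℝ → ℚᵏ` with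
`f dᵢ = eᵢ`. If `|x - y| = dᵢ` then `f x - f y = ±eᵢ`, so `x ↦ (⌊f x j⌋)ⱼ` is a graph homomorphism
from `G_ℝ(D)` to the grid `ℤᵏ`, which is 2-colourable by the parity of the coordinate sum.
-/

open SimpleGraph

theorem gridGraph_colorable_two (k : ℕ) : (gridGraph k).Colorable 2 := by
  refine (Coloring.mk (fun v : Fin k → ℤ => ((∑ i, v i : ℤ) : ZMod 2)) ?_).colorable
  rintro u v ⟨i, hi, hj⟩ h
  have hsum : ∑ j, u j - ∑ j, v j = u i - v i := by
    rw [← Finset.sum_sub_distrib,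
      Finset.sum_eq_single i (fun j _ hji => by rw [hj j hji, sub_self]) (by simp)]
  have hpar : ((u i - v i : ℤ) : ZMod 2) = 0 := by
    rw [← hsum, Int.cast_sub, h, sub_self]
  rcases abs_eq zero_le_one |>.mp hi with h1 | h1 <;> rw [h1] at hpar <;> simp at hpar

theorem gridGraph_adj_floor_of_eq_add_single {K : Type*} [Field K] [LinearOrder K]
    [IsStrictOrderedRing K] [FloorRing K] {k : ℕ} {u v : Fin k → K} {i : Fin k}
    (h : u = v + Pi.single i 1) : (gridGraph k).Adj (fun j => ⌊u j⌋) (fun j => ⌊v j⌋) := by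
  subst h
  exact ⟨i, by simp, fun j hji => by simp [hji]⟩

theorem LinearIndependent.exists_linearMap_apply_eq_single {K V ι : Type*} [Field K]
    [AddCommGroup V] [Module K V] [DecidableEq ι] {v : ι → V} (hv : LinearIndependent K v) :
    ∃ f : V →ₗ[K] ι → K, ∀ i, f (v i) = Pi.single i 1 := by
  obtain ⟨g, hg⟩ :=
    (Finsupp.linearCombination K v).exists_leftInverse_of_injective (LinearMap.ker_eq_bot.mpr hv)
  refine ⟨Finsupp.lcoeFun ∘ₗ g, fun i => ?_⟩
  have : g (v i) = Finsupp.single i 1 := by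
    simpa using LinearMap.congr_fun hg (Finsupp.single i 1)
  simp [this, Finsupp.single_eq_pi_single]

def distGraphHomGridGraph {K : Type*} [Field K] [LinearOrder K]
    [IsStrictOrderedRing K] [FloorRing K] {k : ℕ} {d : Fin k → ℝ} (f : ℝ →+ Fin k → K)
    (hf : ∀ i, f (d i) = Pi.single i 1) : distGraph (Set.range d) →g gridGraph k where
  toFun x j := ⌊f x j⌋
  map_rel' := by
    rintro x y ⟨-, i, hi⟩
    rcases abs_choice (x - y) with hxy | hxy <;> rw [hxy] at hi
    · exact gridGraph_adj_floor_of_eq_add_single (by rw [← hf i, hi, map_sub, add_sub_cancel])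
    · refine (gridGraph_adj_floor_of_eq_add_single (i := i) ?_).symm
      rw [← hf i, hi, map_neg, map_sub, neg_sub, add_sub_cancel]

theorem stmt19_general (k : ℕ) (dv : Fin k → ℝ)
    (halg : AlgebraicIndependent ℚ dv) :
    (∀ V : Finset ℝ,
        ((distGraph (Set.range dv)).induce (V : Set ℝ)).chromaticNumber ≤
          (gridGraph k).chromaticNumber) ∧
      (distGraph (Set.range dv)).Colorable 2 := by
  obtain ⟨f, hf⟩ := halg.linearIndependent.exists_linearMap_apply_eq_single
  let φ := distGraphHomGridGraph f.toAddMonoidHom hf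
  exact ⟨fun V => chromaticNumber_mono_of_hom (φ.comp (Embedding.induce (V : Set ℝ)).toHom),
    (gridGraph_colorable_two k).of_hom φ⟩

/-- For D = {d₁,…,d_k} algebraically independent over ℚ, every finite subgraph of
G_ℝ(D) has chromatic number at most that of the k-dimensional grid graph;
in particular G_ℝ(D) is 2-colorable. -/
theorem stmt19 (k : ℕ) (dv : Fin k → ℝ) (hinj : Function.Injective dv)
    (halg : AlgebraicIndependent ℚ dv) :
    (∀ V : Finset ℝ,
        ((distGraph (Set.range dv)).induce (V : Set ℝ)).chromaticNumber ≤
          (gridGraph k).chromaticNumber) ∧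
      (distGraph (Set.range dv)).Colorable 2 :=
  stmt19_general k dv halg
end
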